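/- For any state with equal current and buffered learning rates (θ, η, θ', η), and any α > 0 with β := (ρ + γ)/α − γ/α², the identity GD^ρ(θ, η, θ', η) = [Π₄^α ∘ Π₂^α ∘ Π₁^α ∘ GD^β ∘ Π₂^{α⁻¹} ∘ Π₃^α ∘ Π₄^α](θ, η, θ', η) holds, where Π₁^c, Π₂^c, Π₃^c, Π₄^c scale the first, second, third, and fourth components of the state by c respectively. -/
import Mathlib


/-- The state space of SGD with momentum: (current params, current LR,
buffered params, buffered LR). -/
abbrev GDState (n : ℕ) : Type :=
  EuclideanSpace ℝ (Fin n) × ℝ × EuclideanSpace ℝ (Fin n) × ℝ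

/-- One step of gradient descent with momentum `γ` and weight-decay factor `ρ`:
`GD^ρ(θ, η, θ', η') = (ρθ + η(γ(θ − θ')/η' − ∇L(θ)), η, θ, η)`. -/
noncomputable def GDStep (n : ℕ) (L : EuclideanSpace ℝ (Fin n) → ℝ)
    (γ ρ : ℝ) (s : GDState n) : GDState n :=
  (ρ • s.1 + s.2.1 • ((s.2.2.2)⁻¹ • (γ • (s.1 - s.2.2.1)) - gradient L s.1),
    s.2.1, s.1, s.2.1)

/-- Scale the current parameters by `c`. -/
noncomputable def Pi1 (n : ℕ) (c : ℝ) (s : GDState n) : GDState n :=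
  (c • s.1, s.2.1, s.2.2.1, s.2.2.2)

/-- Scale the current learning rate by `c`. -/
def Pi2 (n : ℕ) (c : ℝ) (s : GDState n) : GDState n :=
  (s.1, c * s.2.1, s.2.2.1, s.2.2.2)

/-- Scale the buffered parameters by `c`. -/
noncomputable def Pi3 (n : ℕ) (c : ℝ) (s : GDState n) : GDState n :=
  (s.1, s.2.1, c • s.2.2.1, s.2.2.2)

/-- Scale the buffered learning rate by `c`. -/
def Pi4 (n : ℕ) (c : ℝ) (s : GDState n) : GDState n :=
  (s.1, s.2.1, s.2.2.1, c * s.2.2.2)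

/-- Conjugated GD updates: a GD step with factor `ρ` on a state with equal
current and buffered learning rates equals a GD step with factor
`β = (ρ + γ)/α − γ/α²` conjugated with scaling maps. -/
theorem conjugated_gd_updates (n : ℕ)
    (L : EuclideanSpace ℝ (Fin n) → ℝ)
    (hdiff : Differentiable ℝ L)
    (hscale : ∀ c : ℝ, 0 < c → ∀ θ : EuclideanSpace ℝ (Fin n), L (c • θ) = L θ)
    (γ ρ : ℝ) (hγ : 0 < γ)
    (θ θ' : EuclideanSpace ℝ (Fin n)) (η : ℝ) (hη : 0 < η)
    (α β : ℝ) (hα : 0 < α) (hβ : β = (ρ + γ) / α - γ / α ^ 2) :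
    GDStep n L γ ρ (θ, η, θ', η) =
      (Pi4 n α ∘ Pi2 n α ∘ Pi1 n α ∘ GDStep n L γ β ∘ Pi2 n α⁻¹ ∘ Pi3 n α ∘ Pi4 n α)
        (θ, η, θ', η) := by
  have hα' : α ≠ 0 := ne_of_gt hα
  have hη' : η ≠ 0 := ne_of_gt hη
  simp only [Function.comp_apply, GDStep, Pi1, Pi2, Pi3, Pi4, hβ]
  refine Prod.ext ?_ (Prod.ext ?_ (Prod.ext ?_ ?_))
  · simp only [smul_sub, smul_smul, smul_add, mul_inv_rev, sub_smul, add_smul]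
    match_scalars <;> field_simp <;> ring
  · field_simp
  · rfl
  · field_simp
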